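/- Let g : [0,∞) → [0,∞) be increasing with g(x) ≤ x for all x ≥ 0 and lim_n n^{-2} ∫_1^n g(x) dx = 0. Let (𝓖_n) be a filtration with 𝓖_0 = {∅,Ω} and 𝓖_n ⊂ 𝓕_n, assume E[f(X_k) | 𝓖_n] = E[f(X_{n+1}) | 𝓖_n] a.s. for all k > n ≥ 0 and all bounded Borel f, and assume 𝓕_{n−⌊g(n)⌋} ⊂ 𝓖_n for each n ≥ 0. Then for each bounded Borel function f : S → ℝ, the sequence (1/n) Σ_{i=1}^n f(X_i) converges in probability as n → ∞. -/

import Mathlib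

open MeasureTheory ProbabilityTheory Filter Topology
open scoped ENNReal NNReal

variable {Ω S : Type*}

/-- `Filt X n` is the σ-field `𝓕_n = σ(X_1,…,X_n)` generated by the first `n` variables.
Indexing convention: `X i` here denotes the paper's `X_{i+1}`, so that `Filt X 0 = ⊥`. -/
def Filt [MeasurableSpace S] (X : ℕ → Ω → S) (n : ℕ) : MeasurableSpace Ω :=
  ⨆ i ∈ Finset.range n, MeasurableSpace.comap (X i) inferInstance

/-- The predictive mean `α_n(f) = E[f(X_{n+1}) ∣ 𝓕_n]` (here the paper's `X_{n+1}` is `X n`). -/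
noncomputable def predMean [MeasurableSpace Ω] [MeasurableSpace S]
    (P : Measure Ω) (X : ℕ → Ω → S) (f : S → ℝ) (n : ℕ) : Ω → ℝ :=
  P[(fun ω => f (X n ω)) | Filt X n]

/-!
Put `Y i = f (X i)` and `M n = E[Y n | 𝓖 n]`. The hypothesis on the conditional laws makes `M` a
bounded `𝓖`-martingale, so `M` and its Cesàro means converge almost surely. The differences
`D i = Y i - M i` satisfy `E[D j | 𝓖 j] = 0`, and `D i` is `𝓖 j`-measurable as soon as
`i + ⌊g j⌋ < j`, because then `𝓕 (i + 1) ⊆ 𝓕 (j - ⌊g j⌋) ⊆ 𝓖 j`. Hence `E[D i D j] = 0` outside a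
band of width `⌊g j⌋` around the diagonal, `E[(∑_{i<n} D i)²] = O(n + ∑_{j<n} g j) = o(n²)`, and
the Cesàro means of `D` tend to `0` in probability by Chebyshev's inequality.
-/

open Finset

theorem MeasureTheory.TendstoInMeasure.add {α ι E : Type*} [MeasurableSpace α] {μ : Measure α}
    [SeminormedAddCommGroup E] {l : Filter ι} {f g : ι → α → E} {F G : α → E}
    (hf : TendstoInMeasure μ f l F) (hg : TendstoInMeasure μ g l G) :
    TendstoInMeasure μ (f + g) l (F + G) := by
  rw [tendstoInMeasure_iff_dist] at hf hg ⊢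
  intro ε hε
  have hsplit : ∀ i, {x | ε ≤ dist ((f + g) i x) ((F + G) x)} ⊆
      {x | ε / 2 ≤ dist (f i x) (F x)} ∪ {x | ε / 2 ≤ dist (g i x) (G x)} := by
    intro i x hx
    by_contra! hlt
    simp only [Set.mem_union, Set.mem_ofPred_eq, not_or, not_le, Pi.add_apply] at hx hlt
    linarith [dist_add_add_le (f i x) (g i x) (F x) (G x)]
  refine tendsto_of_tendsto_of_tendsto_of_le_of_le tendsto_const_nhds
    (by simpa using (hf _ (half_pos hε)).add (hg _ (half_pos hε))) (fun _ => zero_le)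
    fun i => (measure_mono (hsplit i)).trans (measure_union_le _ _)

theorem tendstoInMeasure_zero_of_tendsto_integral_sq {α ι : Type*} [MeasurableSpace α]
    {μ : Measure α} [IsFiniteMeasure μ] {l : Filter ι} {Z : ι → α → ℝ}
    (hZ : ∀ i, Integrable (fun x => Z i x ^ 2) μ)
    (h : Tendsto (fun i => ∫ x, Z i x ^ 2 ∂μ) l (𝓝 0)) :
    TendstoInMeasure μ Z l 0 := by
  rw [tendstoInMeasure_iff_dist]
  intro ε hε
  have hε2 : 0 < ε ^ 2 := by positivity
  have hmarkov : ∀ i, μ {x | ε ≤ dist (Z i x) 0} ≤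
      ENNReal.ofReal ((∫ x, Z i x ^ 2 ∂μ) / ε ^ 2) := by
    intro i
    have hsub : {x | ε ≤ dist (Z i x) 0} ⊆ {x | ε ^ 2 ≤ Z i x ^ 2} := fun x hx => by
      simpa [sq_abs] using pow_le_pow_left₀ hε.le (show ε ≤ |Z i x| by simpa using hx) 2
    rw [← ofReal_measureReal (measure_ne_top μ _)]
    refine ENNReal.ofReal_le_ofReal ((measureReal_mono hsub).trans ?_)
    rw [le_div_iff₀ hε2, mul_comm]
    exact mul_meas_ge_le_integral_of_nonneg (ae_of_all _ fun x => sq_nonneg _) (hZ i) _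
  refine tendsto_of_tendsto_of_tendsto_of_le_of_le tendsto_const_nhds ?_ (fun _ => zero_le)
    hmarkov
  simpa using ENNReal.tendsto_ofReal (h.div_const (ε ^ 2))

theorem sum_range_le_mul_of_eq_zero {a : ℕ → ℝ} {n c : ℕ} {K : ℝ} (hK : 0 ≤ K)
    (ha : ∀ i < n, a i ≤ K) (hzero : ∀ i, i + c < n → a i = 0) :
    ∑ i ∈ range n, a i ≤ c * K := by
  rw [← sum_filter_of_ne (p := fun i => n ≤ i + c) fun i _ hi => by
    by_contra h; exact hi (hzero i (by omega))]
  calc ∑ i ∈ (range n).filter (fun i => n ≤ i + c), a i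
      ≤ ∑ _i ∈ (range n).filter (fun i => n ≤ i + c), K :=
        sum_le_sum fun i hi => ha i (mem_range.1 (mem_filter.1 hi).1)
    _ ≤ c * K := by
        rw [sum_const, nsmul_eq_mul]
        refine mul_le_mul_of_nonneg_right ?_ hK
        have hsub : (range n).filter (fun i => n ≤ i + c) ⊆ Ico (n - c) n := fun i hi => by
          simp only [mem_filter, mem_range, mem_Ico] at hi ⊢; omega
        exact_mod_cast (card_le_card hsub).trans (by simp; omega)

theorem integral_sq_sum_range_le {α : Type*} [MeasurableSpace α] {μ : Measure α}
    {D : ℕ → α → ℝ} {c : ℕ → ℕ} {K : ℝ} (hD : ∀ i, MemLp (D i) 2 μ)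
    (hK : ∀ i j, ∫ x, D i x * D j x ∂μ ≤ K)
    (horth : ∀ i j, i + c j < j → ∫ x, D i x * D j x ∂μ = 0) (n : ℕ) :
    ∫ x, (∑ i ∈ range n, D i x) ^ 2 ∂μ ≤ K * ∑ j ∈ range n, (2 * c j + 1 : ℝ) := by
  have hK₀ : 0 ≤ K := (integral_nonneg fun x => mul_self_nonneg (D 0 x)).trans (hK 0 0)
  have hprod : ∀ i j, Integrable (fun x => D i x * D j x) μ := fun i j =>
    (hD i).integrable_mul (hD j)
  induction n with
  | zero => simp
  | succ n ih =>
    have hS : MemLp (fun x => ∑ i ∈ range n, D i x) 2 μ := memLp_finsetSum _ fun i _ => hD i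
    have hcrossInt : Integrable (fun x => 2 * ∑ i ∈ range n, D i x * D n x) μ :=
      (integrable_finsetSum _ fun i _ => hprod i n).const_mul 2
    have hexpand : ∀ x, (∑ i ∈ range (n + 1), D i x) ^ 2 =
        (∑ i ∈ range n, D i x) ^ 2 + 2 * ∑ i ∈ range n, D i x * D n x + D n x * D n x := by
      intro x
      rw [sum_range_succ, ← sum_mul]
      ring
    have hcross : ∑ i ∈ range n, ∫ x, D i x * D n x ∂μ ≤ c n * K :=
      sum_range_le_mul_of_eq_zero hK₀ (fun i _ => hK i n) fun i hi => horth i n hi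
    simp_rw [hexpand]
    have hfirst : Integrable (fun x => (∑ i ∈ range n, D i x) ^ 2 +
        2 * ∑ i ∈ range n, D i x * D n x) μ := hS.integrable_sq.add hcrossInt
    rw [integral_add hfirst (hprod n n),
      integral_add hS.integrable_sq hcrossInt, integral_const_mul,
      integral_finsetSum _ fun i _ => hprod i n, sum_range_succ]
    nlinarith [hK n n]

theorem sum_range_le_integral_of_monotoneOn {g : ℝ → ℝ} (hg : MonotoneOn g (Set.Ici 0)) (n : ℕ) :
    ∑ j ∈ range n, g j ≤ (∫ x in (0 : ℝ)..1, g x) + ∫ x in (1 : ℝ)..n, g x := by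
  have hint : ∀ u v : ℝ, 0 ≤ u → 0 ≤ v → IntervalIntegrable g volume u v := fun u v hu hv =>
    (hg.mono fun x hx => le_trans (le_inf hu hv) hx.1).intervalIntegrable
  rw [intervalIntegral.integral_add_adjacent_intervals (hint 0 1 le_rfl zero_le_one)
    (hint 1 n zero_le_one n.cast_nonneg)]
  simpa using MonotoneOn.sum_le_integral (x₀ := 0) (a := n) (hg.mono fun x hx => hx.1)

theorem tendsto_sum_floor_div_sq {g : ℝ → ℝ} (hg_mono : MonotoneOn g (Set.Ici 0))
    (hg_nonneg : ∀ x, 0 ≤ x → 0 ≤ g x)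
    (hg_int : Tendsto (fun n : ℕ => (∫ x in (1 : ℝ)..n, g x) / (n : ℝ) ^ 2) atTop (𝓝 0)) :
    Tendsto (fun n : ℕ => (∑ j ∈ range n, (⌊g j⌋₊ : ℝ)) / (n : ℝ) ^ 2) atTop (𝓝 0) := by
  have hsq : Tendsto (fun n : ℕ => (n : ℝ) ^ 2) atTop atTop :=
    (tendsto_pow_atTop two_ne_zero).comp tendsto_natCast_atTop_atTop
  have hupper := (tendsto_const_nhds (x := ∫ x in (0 : ℝ)..1, g x)).div_atTop hsq |>.add hg_int
  rw [zero_add] at hupper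
  refine tendsto_of_tendsto_of_tendsto_of_le_of_le tendsto_const_nhds hupper
    (fun n => by positivity) fun n => ?_
  rw [← add_div]
  gcongr
  exact (sum_le_sum fun j _ => Nat.floor_le (hg_nonneg _ (Nat.cast_nonneg j))).trans
    (sum_range_le_integral_of_monotoneOn hg_mono n)

section ConditionalExpectation

variable {m₀ : MeasurableSpace Ω} {μ : Measure Ω}

theorem condExp_sub_condExp_eq_zero [IsFiniteMeasure μ] {m : MeasurableSpace Ω} (hm : m ≤ m₀)
    {Y : Ω → ℝ} (hY : Integrable Y μ) :
    μ[Y - μ[Y | m] | m] =ᵐ[μ] 0 := by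
  filter_upwards [condExp_sub hY integrable_condExp m] with ω hω
  rw [hω, condExp_of_stronglyMeasurable hm stronglyMeasurable_condExp integrable_condExp,
    Pi.sub_apply, sub_self, Pi.zero_apply]

theorem integral_mul_eq_zero_of_condExp_eq_zero [IsFiniteMeasure μ] {m : MeasurableSpace Ω}
    (hm : m ≤ m₀) {f g : Ω → ℝ}
    (hf : StronglyMeasurable[m] f) (hfg : Integrable (f * g) μ) (hg : Integrable g μ)
    (hg₀ : μ[g | m] =ᵐ[μ] 0) :
    ∫ ω, (f * g) ω ∂μ = 0 := by
  have hzero : μ[f * g | m] =ᵐ[μ] 0 := by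
    filter_upwards [condExp_mul_of_stronglyMeasurable_left hf hfg hg, hg₀] with ω hω hω₀
    simp [hω, hω₀]
  rw [← integral_condExp hm, integral_congr_ae hzero]
  simp

theorem martingale_condExp_of_condExp_succ [IsFiniteMeasure μ] (𝒢 : Filtration ℕ m₀)
    {Y : ℕ → Ω → ℝ} (hY : ∀ n, μ[Y (n + 1) | 𝒢 n] =ᵐ[μ] μ[Y n | 𝒢 n]) :
    Martingale (fun n => μ[Y n | 𝒢 n]) 𝒢 μ :=
  martingale_nat (fun _ => stronglyMeasurable_condExp) (fun _ => integrable_condExp) fun n =>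
    ((condExp_condExp_of_le (𝒢.mono n.le_succ) (𝒢.le _)).trans (hY n)).symm

theorem MeasureTheory.Submartingale.exists_tendstoInMeasure_cesaro [IsFiniteMeasure μ]
    {𝒢 : Filtration ℕ m₀} {M : ℕ → Ω → ℝ} (hM : Submartingale M 𝒢 μ) {R : ℝ≥0}
    (hbdd : ∀ n, eLpNorm (M n) 1 μ ≤ R) :
    ∃ l : Ω → ℝ, TendstoInMeasure μ (fun n ω => (∑ i ∈ range n, M i ω) / n) atTop l := by
  refine ⟨𝒢.limitProcess M μ, tendstoInMeasure_of_tendsto_ae (fun n => ?_) ?_⟩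
  · exact ((integrable_finsetSum _ fun i _ => hM.integrable i).div_const _).aestronglyMeasurable
  · filter_upwards [hM.ae_tendsto_limitProcess hbdd] with ω hω
    simpa [div_eq_inv_mul] using hω.cesaro

theorem tendstoInMeasure_cesaro_sub_condExp [IsProbabilityMeasure μ] (𝒢 : Filtration ℕ m₀)
    {Y : ℕ → Ω → ℝ} {C : ℝ} {c : ℕ → ℕ} (hY : ∀ i, AEStronglyMeasurable (Y i) μ)
    (hYC : ∀ i, ∀ᵐ ω ∂μ, |Y i ω| ≤ C)
    (hY𝒢 : ∀ i j, i + c j < j → StronglyMeasurable[𝒢 j] (Y i))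
    (hc : Tendsto (fun n : ℕ => (∑ j ∈ range n, (c j : ℝ)) / (n : ℝ) ^ 2) atTop (𝓝 0)) :
    TendstoInMeasure μ (fun n ω => (∑ i ∈ range n, (Y i ω - μ[Y i | 𝒢 i] ω)) / n) atTop 0 := by
  set D : ℕ → Ω → ℝ := fun i => Y i - μ[Y i | 𝒢 i]
  change TendstoInMeasure μ (fun n ω => (∑ i ∈ range n, D i ω) / n) atTop 0
  have hYint : ∀ i, Integrable (Y i) μ := fun i => .of_bound (hY i) C (by simpa using hYC i)
  have hDC : ∀ i, ∀ᵐ ω ∂μ, |D i ω| ≤ 2 * C := fun i => by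
    filter_upwards [hYC i, ae_bdd_abs_condExp_of_ae_bdd_abs (m := 𝒢 i) (hYC i)] with ω h₁ h₂
    exact (abs_sub _ _).trans (by linarith)
  have hD : ∀ i, MemLp (D i) 2 μ := fun i =>
    .of_bound ((hY i).sub integrable_condExp.aestronglyMeasurable) _ (by simpa using hDC i)
  have hK : ∀ i j, ∫ ω, D i ω * D j ω ∂μ ≤ (2 * C) ^ 2 := fun i j => by
    refine (integral_mono_ae ((hD i).integrable_mul (hD j)) (integrable_const ((2 * C) ^ 2))
      ?_).trans (by simp)
    filter_upwards [hDC i, hDC j] with ω hi hj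
    calc D i ω * D j ω ≤ |D i ω| * |D j ω| := by rw [← abs_mul]; exact le_abs_self _
      _ ≤ (2 * C) ^ 2 := by
        rw [sq]; exact mul_le_mul hi hj (abs_nonneg _) ((abs_nonneg _).trans hi)
  have horth : ∀ i j, i + c j < j → ∫ ω, D i ω * D j ω ∂μ = 0 := fun i j hij =>
    integral_mul_eq_zero_of_condExp_eq_zero (𝒢.le j)
      ((hY𝒢 i j hij).sub (stronglyMeasurable_condExp.mono (𝒢.mono (by omega))))
      ((hD i).integrable_mul (hD j)) ((hYint j).sub integrable_condExp)
      (condExp_sub_condExp_eq_zero (𝒢.le j) (hYint j))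
  refine tendstoInMeasure_zero_of_tendsto_integral_sq
    (fun n => by simpa only [div_pow] using
      ((memLp_finsetSum (range n) fun i _ => hD i).integrable_sq.div_const ((n : ℝ) ^ 2))) ?_
  have hbound : ∀ n : ℕ, ∫ ω, ((∑ i ∈ range n, D i ω) / n) ^ 2 ∂μ ≤
      (2 * C) ^ 2 * (2 * ((∑ j ∈ range n, (c j : ℝ)) / (n : ℝ) ^ 2) + 1 / n) := fun n => by
    simp_rw [div_pow, integral_div]
    rcases n.eq_zero_or_pos with rfl | hn
    · simp
    calc (∫ ω, (∑ i ∈ range n, D i ω) ^ 2 ∂μ) / (n : ℝ) ^ 2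
        ≤ (2 * C) ^ 2 * (∑ j ∈ range n, (2 * c j + 1 : ℝ)) / (n : ℝ) ^ 2 := by
          gcongr; exact integral_sq_sum_range_le hD hK horth n
      _ = _ := by
          rw [sum_add_distrib, ← mul_sum]
          field_simp
          simp
  refine tendsto_of_tendsto_of_tendsto_of_le_of_le tendsto_const_nhds ?_
    (fun n => integral_nonneg fun ω => sq_nonneg _) hbound
  simpa using ((hc.const_mul 2).add tendsto_one_div_atTop_nhds_zero_nat).const_mul ((2 * C) ^ 2)

end ConditionalExpectation

theorem filt_mono [MeasurableSpace S] (X : ℕ → Ω → S) : Monotone (Filt X) := fun _ _ hab =>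
  biSup_mono fun _ hi => mem_range.2 ((mem_range.1 hi).trans_le hab)

theorem filt_le [m : MeasurableSpace Ω] [MeasurableSpace S] {X : ℕ → Ω → S}
    (hX : ∀ i, Measurable (X i)) (n : ℕ) : Filt X n ≤ m :=
  iSup₂_le fun i _ => (hX i).comap_le

theorem measurable_filt_of_lt [MeasurableSpace S] (X : ℕ → Ω → S) {i n : ℕ} (h : i < n) :
    Measurable[Filt X n] (X i) :=
  measurable_iff_comap_le.2 (le_iSup₂_of_le i (mem_range.2 h) le_rfl)

theorem stmt16_general [MeasurableSpace Ω] [MeasurableSpace S]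
    (P : Measure Ω) [IsProbabilityMeasure P]
    (X : ℕ → Ω → S) (hX : ∀ i, Measurable (X i))
    (g : ℝ → ℝ) (hg_mono : MonotoneOn g (Set.Ici 0))
    (hg_nonneg : ∀ x : ℝ, 0 ≤ x → 0 ≤ g x)
    (hg_int : Tendsto (fun n : ℕ => (∫ x in (1 : ℝ)..(n : ℝ), g x) / (n : ℝ) ^ 2)
      atTop (𝓝 0))
    (G : ℕ → MeasurableSpace Ω) (hGmono : Monotone G)
    (hGF : ∀ n, G n ≤ Filt X n)
    (hcid : ∀ f : S → ℝ, Measurable f → (∃ C, ∀ x, |f x| ≤ C) → ∀ n k : ℕ, n ≤ k →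
      P[(fun ω => f (X k ω)) | G n] =ᵐ[P] P[(fun ω => f (X n ω)) | G n])
    (hFG : ∀ n : ℕ, Filt X (n - ⌊g (n : ℝ)⌋₊) ≤ G n) :
    ∀ f : S → ℝ, Measurable f → (∃ C, ∀ x, |f x| ≤ C) →
      ∃ l : Ω → ℝ, TendstoInMeasure P
        (fun n ω => (∑ i ∈ Finset.range n, f (X i ω)) / n) atTop l := by
  intro f hf ⟨C, hC⟩
  let 𝒢 : Filtration ℕ ‹MeasurableSpace Ω› :=
    ⟨G, hGmono, fun n => (hGF n).trans (filt_le hX n)⟩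
  have hY𝒢 : ∀ i j : ℕ, i + ⌊g j⌋₊ < j → StronglyMeasurable[𝒢 j] (fun ω => f (X i ω)) :=
    fun i j hij => (hf.comp ((measurable_filt_of_lt X i.lt_succ_self).mono
      ((filt_mono X (by omega : i + 1 ≤ j - ⌊g j⌋₊)).trans (hFG j)) le_rfl)).stronglyMeasurable
  have hM : Martingale (fun n => P[fun ω => f (X n ω) | 𝒢 n]) 𝒢 P :=
    martingale_condExp_of_condExp_succ 𝒢 fun n => hcid f hf ⟨C, hC⟩ n (n + 1) n.le_succ
  obtain ⟨l, hl⟩ := hM.submartingale.exists_tendstoInMeasure_cesaro (R := C.toNNReal) fun n =>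
    (eLpNorm_condExp_le_eLpNorm _ le_rfl).trans ((eLpNorm_le_of_ae_bound (μ := P)
      (f := fun ω => f (X n ω)) (ae_of_all _ fun ω => hC (X n ω))).trans (by simp))
  have hD := tendstoInMeasure_cesaro_sub_condExp (μ := P) (Y := fun i ω => f (X i ω)) 𝒢
    (fun i => (hf.comp (hX i)).aestronglyMeasurable) (fun i => ae_of_all _ fun ω => hC (X i ω))
    hY𝒢 (tendsto_sum_floor_div_sq hg_mono hg_nonneg hg_int)
  refine ⟨l, ((hD.add hl).congr_left fun n => ae_of_all _ fun ω => ?_).congr_right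
    (ae_of_all _ fun ω => zero_add (l ω))⟩
  simp only [Pi.add_apply, ← add_div, ← sum_add_distrib, sub_add_cancel]

/-- Theorem `vc67m91q`: with `g` increasing, `0 ≤ g(x) ≤ x`,
`n⁻² ∫_1ⁿ g(x) dx → 0`, a filtration `(𝓖_n)` with `𝓖_0` trivial, `𝓖_n ⊆ 𝓕_n`,
`E[f(X_k) ∣ 𝓖_n] = E[f(X_{n+1}) ∣ 𝓖_n]` a.s. for `k > n`, and `𝓕_{n−⌊g(n)⌋} ⊆ 𝓖_n`, the
empirical means `(1/n) ∑_{i=1}^n f(X_i)` converge in probability for each bounded Borel `f`. -/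
theorem stmt16 [MeasurableSpace Ω]
    [TopologicalSpace S] [PolishSpace S] [MeasurableSpace S] [BorelSpace S]
    (P : Measure Ω) [IsProbabilityMeasure P]
    (X : ℕ → Ω → S) (hX : ∀ i, Measurable (X i))
    (g : ℝ → ℝ) (hg_mono : MonotoneOn g (Set.Ici 0))
    (hg_nonneg : ∀ x : ℝ, 0 ≤ x → 0 ≤ g x) (hg_le : ∀ x : ℝ, 0 ≤ x → g x ≤ x)
    (hg_int : Tendsto (fun n : ℕ => (∫ x in (1 : ℝ)..(n : ℝ), g x) / (n : ℝ) ^ 2)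
      atTop (𝓝 0))
    (G : ℕ → MeasurableSpace Ω) (hG0 : G 0 = ⊥) (hGmono : Monotone G)
    (hGF : ∀ n, G n ≤ Filt X n)
    (hcid : ∀ f : S → ℝ, Measurable f → (∃ C, ∀ x, |f x| ≤ C) → ∀ n k : ℕ, n ≤ k →
      P[(fun ω => f (X k ω)) | G n] =ᵐ[P] P[(fun ω => f (X n ω)) | G n])
    (hFG : ∀ n : ℕ, Filt X (n - ⌊g (n : ℝ)⌋₊) ≤ G n) :
    ∀ f : S → ℝ, Measurable f → (∃ C, ∀ x, |f x| ≤ C) →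
      ∃ l : Ω → ℝ, TendstoInMeasure P
        (fun n ω => (∑ i ∈ Finset.range n, f (X i ω)) / n) atTop l :=
  stmt16_general P X hX g hg_mono hg_nonneg hg_int G hGmono hGF hcid hFG
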